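/- arXiv:2604.13607 — 13 statements merged into one kernel-verified Lean document; each statement's English description precedes it below -/
import Mathlib

section
/- Let X and Y be Hausdorff locally convex spaces and S a set of linear maps from X to Y. Then S is sequentially equicontinuous if and only if for every continuous seminorm p on Y there exist a sequentially continuous seminorm q on X and a constant K ≥ 0 such that sup_{T ∈ S} p(T x) ≤ K q(x) for all x in X. -/
open Filter Topology

/-- A set `S` of linear maps between Hausdorff locally convex spaces is sequentially
equicontinuous if for every continuous seminorm `p` on the codomain and every sequence
tending to `0`, `sup_{T ∈ S} p (T (x n)) → 0`. -/
def SeqEquicontinuousSet {X Y : Type*} [AddCommGroup X] [Module ℝ X] [TopologicalSpace X]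
    [AddCommGroup Y] [Module ℝ Y] [TopologicalSpace Y] (S : Set (X →ₗ[ℝ] Y)) : Prop :=
  ∀ p : Seminorm ℝ Y, Continuous p →
    ∀ x : ℕ → X, Tendsto x atTop (𝓝 0) →
      ∀ ε : ℝ, 0 < ε → ∀ᶠ n in atTop, ∀ T ∈ S, p (T (x n)) ≤ ε

theorem seqEquicontinuous_iff_seq_continuous_seminorm_bound
    {X Y : Type*} [AddCommGroup X] [Module ℝ X] [TopologicalSpace X]
    [IsTopologicalAddGroup X] [ContinuousSMul ℝ X] [T2Space X] [LocallyConvexSpace ℝ X]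
    [AddCommGroup Y] [Module ℝ Y] [TopologicalSpace Y]
    [IsTopologicalAddGroup Y] [ContinuousSMul ℝ Y] [T2Space Y] [LocallyConvexSpace ℝ Y]
    (S : Set (X →ₗ[ℝ] Y)) :
    SeqEquicontinuousSet S ↔
      ∀ p : Seminorm ℝ Y, Continuous p →
        ∃ q : Seminorm ℝ X,
          (∀ x : ℕ → X, Tendsto x atTop (𝓝 0) →
            Tendsto (fun n => q (x n)) atTop (𝓝 0)) ∧
          ∃ K : ℝ, 0 ≤ K ∧ ∀ T ∈ S, ∀ x : X, p (T x) ≤ K * q x := by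
  constructor
  · intro hS p hp
    -- pointwise boundedness
    have hbdd : ∀ x : X, BddAbove (Set.range fun T : S => p (T.1 x)) := by
      intro x
      have hx : Tendsto (fun n : ℕ => ((n : ℝ) + 1)⁻¹ • x) atTop (𝓝 0) := by
        have h1 : Tendsto (fun n : ℕ => ((n : ℝ) + 1)⁻¹) atTop (𝓝 0) :=
          tendsto_one_div_add_atTop_nhds_zero_nat.congr (by intro n; simp [one_div])
        simpa using h1.smul_const x
      obtain ⟨n, hn⟩ := (hS p hp _ hx 1 one_pos).exists
      refine ⟨((n : ℝ) + 1) * 1, ?_⟩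
      rintro r ⟨T, rfl⟩
      have := hn T.1 T.2
      rw [map_smul] at this
      have hpos : (0 : ℝ) < (n : ℝ) + 1 := by positivity
      have : ((n : ℝ) + 1)⁻¹ * p (T.1 x) ≤ 1 := by
        rwa [map_smul_eq_mul, Real.norm_eq_abs, abs_of_pos (inv_pos.mpr hpos)] at this
      calc p (T.1 x) = ((n:ℝ)+1) * (((n:ℝ)+1)⁻¹ * p (T.1 x)) := by
            field_simp
        _ ≤ ((n:ℝ)+1) * 1 := by
            exact mul_le_mul_of_nonneg_left this (le_of_lt hpos)
    have hbddS : BddAbove (Set.range fun T : S => p.comp T.1) := by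
      rw [Seminorm.bddAbove_range_iff]
      intro x
      simpa using hbdd x
    set q : Seminorm ℝ X := ⨆ T : S, p.comp T.1 with hq
    have hq_apply : ∀ x : X, q x = ⨆ T : S, p (T.1 x) := by
      intro x
      rw [hq, Seminorm.iSup_apply hbddS]
      simp [Seminorm.comp_apply]
    refine ⟨q, ?_, 1, zero_le_one, ?_⟩
    · intro x hx
      rw [Metric.tendsto_atTop]
      intro ε hε
      have h2 : (0:ℝ) < ε / 2 := by linarith
      obtain ⟨N, hN⟩ := (hS p hp x hx (ε/2) h2).exists_forall_of_atTop
      refine ⟨N, fun n hn => ?_⟩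
      have hqn : q (x n) ≤ ε / 2 := by
        rw [hq_apply]
        rcases isEmpty_or_nonempty S with h | h
        · rw [Real.iSup_of_isEmpty]; linarith
        · exact ciSup_le fun T => hN n hn T.1 T.2
      have : (0:ℝ) ≤ q (x n) := apply_nonneg q _
      rw [Real.dist_eq]
      rw [abs_of_nonneg (by linarith)]
      linarith
    · intro T hT x
      rw [one_mul, hq_apply]
      exact le_ciSup (hbdd x) ⟨T, hT⟩
  · intro h p hp x hx ε hε
    obtain ⟨q, hq, K, hK, hbound⟩ := h p hp
    have := (hq x hx).eventually_le_const (show (0:ℝ) < ε / (K + 1) by positivity)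
    filter_upwards [this] with n hn T hT
    calc p (T (x n)) ≤ K * q (x n) := hbound T hT (x n)
      _ ≤ K * (ε / (K + 1)) := mul_le_mul_of_nonneg_left hn hK
      _ ≤ ε := by
          rw [mul_div_assoc']
          rw [div_le_iff₀ (by positivity)]
          nlinarith [apply_nonneg q (x 0)]
end

section
/- Let X and Y be Hausdorff locally convex spaces and S a set of linear maps from X to Y. Then S is sequentially equicontinuous if and only if for every absolutely convex open neighbourhood V of zero in Y there is an absolutely convex sequentially open neighbourhood U of zero in X such that T(U) ⊆ V for all T ∈ S. -/
open Filter Topology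

/-- A subset `U` of a topological space is sequentially open if every sequence converging to a
point of `U` is eventually in `U`. -/
def SeqOpenSet {X : Type*} [TopologicalSpace X] (U : Set X) : Prop :=
  ∀ x ∈ U, ∀ u : ℕ → X, Tendsto u atTop (𝓝 x) → ∀ᶠ n in atTop, u n ∈ U

theorem seqEquicontinuous_iff_seqOpen_nhds
    {X Y : Type*} [AddCommGroup X] [Module ℝ X] [TopologicalSpace X]
    [IsTopologicalAddGroup X] [ContinuousSMul ℝ X] [T2Space X] [LocallyConvexSpace ℝ X]
    [AddCommGroup Y] [Module ℝ Y] [TopologicalSpace Y]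
    [IsTopologicalAddGroup Y] [ContinuousSMul ℝ Y] [T2Space Y] [LocallyConvexSpace ℝ Y]
    (S : Set (X →ₗ[ℝ] Y)) :
    SeqEquicontinuousSet S ↔
      ∀ V : Set Y, IsOpen V → Balanced ℝ V → Convex ℝ V → (0 : Y) ∈ V →
        ∃ U : Set X, SeqOpenSet U ∧ Balanced ℝ U ∧ Convex ℝ U ∧ (0 : X) ∈ U ∧
          ∀ T ∈ S, T '' U ⊆ V := by
  constructor
  · intro hS V hVo hVb hVc hV0
    have habs : Absorbent ℝ V := absorbent_nhds_zero (hVo.mem_nhds hV0)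
    set p : Seminorm ℝ Y := gaugeSeminorm hVb hVc habs with hp
    have hpc : Continuous p := continuous_gauge hVc (hVo.mem_nhds hV0)
    refine ⟨{x : X | ∃ r < (1:ℝ), ∀ T ∈ S, p (T x) ≤ r}, ?_, ?_, ?_, ?_, ?_⟩
    · rintro x ⟨r, hr1, hr⟩ u hu
      have hδ : (0:ℝ) < (1 - r) / 2 := by linarith
      have h0 : Tendsto (fun n => u n - x) atTop (𝓝 0) := by
        simpa using hu.sub_const x
      filter_upwards [hS p hpc _ h0 _ hδ] with n hn
      refine ⟨r + (1 - r) / 2, by linarith, fun T hT => ?_⟩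
      have he : T (u n) = T x + T (u n - x) := by rw [← map_add]; congr 1; abel
      calc p (T (u n)) = p (T x + T (u n - x)) := by rw [he]
        _ ≤ p (T x) + p (T (u n - x)) := map_add_le_add p _ _
        _ ≤ r + (1 - r) / 2 := add_le_add (hr T hT) (hn T hT)
    · rintro a ha x ⟨y, ⟨r, hr1, hr⟩, rfl⟩
      refine ⟨r, hr1, fun T hT => ?_⟩
      rw [map_smul, map_smul_eq_mul]
      calc ‖a‖ * p (T y) ≤ 1 * p (T y) :=
            mul_le_mul_of_nonneg_right ha (apply_nonneg _ _)
        _ ≤ r := by rw [one_mul]; exact hr T hT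
    · rintro x ⟨rx, hrx1, hrx⟩ y ⟨ry, hry1, hry⟩ a b ha hb hab
      refine ⟨max rx ry, max_lt hrx1 hry1, fun T hT => ?_⟩
      calc p (T (a • x + b • y)) ≤ a * p (T x) + b * p (T y) := by
            rw [map_add, map_smul, map_smul]
            refine (map_add_le_add p _ _).trans ?_
            simp only [map_smul_eq_mul, Real.norm_eq_abs, abs_of_nonneg ha, abs_of_nonneg hb,
              le_refl]
        _ ≤ a * max rx ry + b * max rx ry := by
            gcongr
            exacts [(hrx T hT).trans (le_max_left _ _), (hry T hT).trans (le_max_right _ _)]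
        _ = max rx ry := by rw [← add_mul, hab, one_mul]
    · exact ⟨0, one_pos, fun T hT => by simp⟩
    · rintro T hT y ⟨x, ⟨r, hr1, hr⟩, rfl⟩
      have : gauge V (T x) < 1 := lt_of_le_of_lt (hr T hT) hr1
      have := gauge_lt_one_eq_self_of_isOpen hVc hV0 hVo
      rw [← this]
      exact lt_of_le_of_lt (hr T hT) hr1
  · intro h p hpc x hx ε hε
    set V : Set Y := p.ball 0 ε with hV
    have hVo : IsOpen V := by
      have : V = {y | p y < ε} := by ext y; simp [hV, Seminorm.mem_ball_zero]
      rw [this]; exact isOpen_lt hpc continuous_const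
    have hVb : Balanced ℝ V := p.balanced_ball_zero ε
    have hVc : Convex ℝ V := p.convex_ball 0 ε
    have hV0 : (0:Y) ∈ V := by simp [hV, Seminorm.mem_ball_zero, hε]
    obtain ⟨U, hUseq, _, _, hU0, hUV⟩ := h V hVo hVb hVc hV0
    filter_upwards [hUseq 0 hU0 x hx] with n hn T hT
    exact le_of_lt (p.mem_ball_zero.mp (hUV T hT ⟨x n, hn, rfl⟩))
end

section
/- Let X and Y be Hausdorff locally convex spaces with X C-sequential, and let S be a set of linear maps from X to Y. Then S is sequentially equicontinuous if and only if S is equicontinuous. -/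
open Filter Topology

/-- A Hausdorff locally convex space is C-sequential if every convex sequentially open subset
is open. -/
def CSequential (X : Type*) [AddCommGroup X] [Module ℝ X] [TopologicalSpace X] : Prop :=
  ∀ U : Set X, Convex ℝ U → SeqOpenSet U → IsOpen U

/-- Equicontinuity of a set of linear maps. -/
def EquicontinuousSet {X Y : Type*} [AddCommGroup X] [Module ℝ X] [TopologicalSpace X]
    [AddCommGroup Y] [Module ℝ Y] [TopologicalSpace Y] (S : Set (X →ₗ[ℝ] Y)) : Prop :=
  ∀ p : Seminorm ℝ Y, Continuous p →
    ∃ q : Seminorm ℝ X, Continuous q ∧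
      ∃ K : ℝ, 0 ≤ K ∧ ∀ T ∈ S, ∀ x : X, p (T x) ≤ K * q x

theorem seqEquicontinuous_iff_equicontinuous_of_cSequential
    {X Y : Type*} [AddCommGroup X] [Module ℝ X] [TopologicalSpace X]
    [IsTopologicalAddGroup X] [ContinuousSMul ℝ X] [T2Space X] [LocallyConvexSpace ℝ X]
    [AddCommGroup Y] [Module ℝ Y] [TopologicalSpace Y]
    [IsTopologicalAddGroup Y] [ContinuousSMul ℝ Y] [T2Space Y] [LocallyConvexSpace ℝ Y]
    (hX : CSequential X) (S : Set (X →ₗ[ℝ] Y)) :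
    SeqEquicontinuousSet S ↔ EquicontinuousSet S := by
  constructor
  · intro hseq p hp
    -- the candidate "unit ball"
    set U : Set X := {x | ∃ c : ℝ, 0 ≤ c ∧ c < 1 ∧ ∀ T ∈ S, p (T x) ≤ c} with hU
    have hconv : Convex ℝ U := by
      rintro x ⟨c, hc0, hc1, hcx⟩ y ⟨d, hd0, hd1, hdy⟩ a b ha hb hab
      refine ⟨max c d, le_trans hc0 (le_max_left _ _), max_lt hc1 hd1, fun T hT => ?_⟩
      calc p (T (a • x + b • y)) ≤ p (T (a • x)) + p (T (b • y)) := by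
            rw [map_add]; exact map_add_le_add p _ _
        _ = a * p (T x) + b * p (T y) := by
            rw [T.map_smul, T.map_smul, map_smul_eq_mul p, map_smul_eq_mul p,
              Real.norm_eq_abs, Real.norm_eq_abs, abs_of_nonneg ha, abs_of_nonneg hb]
        _ ≤ a * max c d + b * max c d := by
            gcongr
            · exact (hcx T hT).trans (le_max_left _ _)
            · exact (hdy T hT).trans (le_max_right _ _)
        _ = max c d := by rw [← add_mul, hab, one_mul]
    have hbal : Balanced ℝ U := by
      rintro a ha x ⟨y, ⟨c, hc0, hc1, hcy⟩, rfl⟩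
      refine ⟨c, hc0, hc1, fun T hT => ?_⟩
      rw [map_smul, map_smul_eq_mul]
      calc ‖a‖ * p (T y) ≤ 1 * p (T y) := by gcongr
        _ = p (T y) := one_mul _
        _ ≤ c := hcy T hT
    have hseqopen : SeqOpenSet U := by
      rintro x ⟨c, hc0, hc1, hcx⟩ u hu
      have hdiff : Tendsto (fun n => u n - x) atTop (𝓝 0) := by
        simpa using hu.sub (tendsto_const_nhds (x := x))
      have hε : (0:ℝ) < (1 - c) / 2 := by linarith
      filter_upwards [hseq p hp _ hdiff _ hε] with n hn
      refine ⟨(1 + c) / 2, by linarith, by linarith, fun T hT => ?_⟩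
      calc p (T (u n)) = p (T x + (T (u n) - T x)) := congrArg p (by abel)
        _ ≤ p (T x) + p (T (u n) - T x) := map_add_le_add p _ _
        _ = p (T x) + p (T (u n - x)) := by rw [map_sub T]
        _ ≤ c + (1 - c) / 2 := add_le_add (hcx T hT) (hn T hT)
        _ = (1 + c) / 2 := by ring
    have hopen : IsOpen U := hX U hconv hseqopen
    have h0 : (0 : X) ∈ U := ⟨0, le_refl 0, one_pos, fun T hT => by simp⟩
    have hUnhds : U ∈ 𝓝 (0 : X) := hopen.mem_nhds h0
    have habs : Absorbent ℝ U := absorbent_nhds_zero hUnhds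
    set q : Seminorm ℝ X := gaugeSeminorm hbal hconv habs with hq
    have hball : q.ball 0 1 = U := gaugeSeminorm_ball_one hopen
    have hqcont : Continuous q := Seminorm.continuous (r := 1) (by rw [hball]; exact hUnhds)
    refine ⟨q, hqcont, 1, zero_le_one, fun T hT x => ?_⟩
    rw [one_mul]
    -- show p (T x) ≤ q x
    refine le_of_forall_pos_le_add fun ε hε => ?_
    have hqε : 0 < q x + ε := add_pos_of_nonneg_of_pos (apply_nonneg q x) hε
    have hy : ((q x + ε)⁻¹ • x) ∈ U := by
      rw [← hball, Seminorm.mem_ball_zero, map_smul_eq_mul, Real.norm_eq_abs,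
        abs_of_pos (inv_pos.2 hqε), inv_mul_lt_iff₀ hqε, mul_one]
      exact lt_add_of_pos_right _ hε
    obtain ⟨c, hc0, hc1, hcy⟩ := hy
    have := hcy T hT
    rw [map_smul, map_smul_eq_mul, Real.norm_eq_abs, abs_of_pos (inv_pos.2 hqε)] at this
    rw [inv_mul_le_iff₀ hqε] at this
    calc p (T x) ≤ (q x + ε) * c := this
      _ ≤ (q x + ε) * 1 := mul_le_mul_of_nonneg_left hc1.le hqε.le
      _ = q x + ε := mul_one _
  · intro heq p hp x hx ε hε
    obtain ⟨q, hqcont, K, hK0, hb⟩ := heq p hp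
    have hq0 : Tendsto (fun n => q (x n)) atTop (𝓝 0) := by
      have := (hqcont.tendsto 0).comp hx
      simpa [Function.comp_def] using this
    have hεK : (0:ℝ) < ε / (K + 1) := div_pos hε (by linarith)
    filter_upwards [hq0.eventually (eventually_le_nhds hεK)] with n hn T hT
    calc p (T (x n)) ≤ K * q (x n) := hb T hT (x n)
      _ ≤ K * (ε / (K + 1)) := by gcongr
      _ ≤ (K + 1) * (ε / (K + 1)) := by gcongr; linarith
      _ = ε := by field_simp
end

section
/- Let X be a C-sequential Hausdorff locally convex space. Then every sequentially continuous seminorm on X is continuous. -/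
open Filter Topology

theorem continuous_of_seqContinuous_seminorm_of_cSequential
    {X : Type*} [AddCommGroup X] [Module ℝ X] [TopologicalSpace X]
    [IsTopologicalAddGroup X] [ContinuousSMul ℝ X] [T2Space X] [LocallyConvexSpace ℝ X]
    (hX : CSequential X) (q : Seminorm ℝ X)
    (hq : ∀ x : ℕ → X, Tendsto x atTop (𝓝 0) → Tendsto (fun n => q (x n)) atTop (𝓝 0)) :
    Continuous q := by
  have hopen : IsOpen (q.ball 0 1) := by
    refine hX _ (q.convex_ball 0 1) ?_
    intro x hx u hu
    have h0 : Tendsto (fun n => u n - x) atTop (𝓝 0) := by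
      simpa using hu.sub (tendsto_const_nhds (x := x))
    have hq' := hq _ h0
    rw [Seminorm.mem_ball_zero] at hx
    have : ∀ᶠ n in atTop, q (u n - x) < 1 - q x :=
      hq'.eventually (eventually_lt_nhds (by linarith))
    filter_upwards [this] with n hn
    rw [Seminorm.mem_ball_zero]
    calc q (u n) = q (u n - x + x) := by rw [sub_add_cancel]
      _ ≤ q (u n - x) + q x := q.add_le' _ _
      _ < 1 := by linarith
  exact Seminorm.continuous (r := 1) (hopen.mem_nhds (q.mem_ball_self one_pos))
end

section
/- Let X be a Hausdorff locally convex space, C : X → X linear, and (S(t))_{t≥0} a C-cosine family on X. If x ∈ X satisfies lim_{t→∞} S(t)x = 0 and lim_{t→∞} S(t)Cx = 0, and (S(t))_{t≥0} is sequentially equicontinuous, then C²x = 0. -/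
open Filter Topology

theorem ccosine_sq_eq_zero_of_tendsto_zero
    {X : Type*} [AddCommGroup X] [Module ℝ X] [TopologicalSpace X]
    [IsTopologicalAddGroup X] [ContinuousSMul ℝ X] [T2Space X] [LocallyConvexSpace ℝ X]
    (C : X →ₗ[ℝ] X) (S : ℝ → X →ₗ[ℝ] X)
    (hS0 : S 0 = C)
    (hcos : ∀ t s : ℝ, 0 ≤ s → s ≤ t → ∀ y : X,
      (2 : ℝ) • S t (S s y) = S (t + s) (C y) + S (t - s) (C y))
    (x : X)
    (hx1 : Tendsto (fun t => S t x) atTop (𝓝 0))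
    (hx2 : Tendsto (fun t => S t (C x)) atTop (𝓝 0))
    (hseq : ∀ p : Seminorm ℝ X, Continuous p →
      ∀ u : ℕ → X, Tendsto u atTop (𝓝 0) →
        ∀ ε : ℝ, 0 < ε → ∀ᶠ n in atTop, ∀ t : ℝ, 0 ≤ t → p (S t (u n)) ≤ ε) :
    C (C x) = 0 := by
  by_contra hz
  obtain ⟨f, hf⟩ := SeparatingDual.exists_ne_zero (R := ℝ) hz
  set z := C (C x) with hzdef
  -- key identity: z = 2 • S t (S t x) - S (t+t) (C x) for t ≥ 0
  have key : ∀ t : ℝ, 0 ≤ t → z = (2 : ℝ) • S t (S t x) - S (t + t) (C x) := by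
    intro t ht
    have h := hcos t t ht le_rfl x
    have h0 : S (t - t) (C x) = z := by
      rw [sub_self, hS0]
    rw [h0] at h
    refine eq_sub_iff_add_eq.mpr ?_
    rw [h]
    abel
  -- seminorm from f
  set p : Seminorm ℝ X := (normSeminorm ℝ ℝ).comp f.toLinearMap with hp
  have hpcont : Continuous p := by
    have : (p : X → ℝ) = fun y => ‖f y‖ := rfl
    rw [show (Continuous p) = Continuous (fun y => ‖f y‖) from congrArg _ this]
    exact continuous_norm.comp f.continuous
  set ε : ℝ := |f z| / 4 with hε
  have hεpos : 0 < ε := by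
    have : f z ≠ 0 := hf
    positivity
  -- sequence u n = S n x tends to 0
  have hu : Tendsto (fun n : ℕ => S (n : ℝ) x) atTop (𝓝 0) :=
    hx1.comp tendsto_natCast_atTop_atTop
  have h1 := hseq p hpcont _ hu ε hεpos
  -- f (S t (C x)) → 0
  have h2' : Tendsto (fun n : ℕ => f (S ((n : ℝ) + n) (C x))) atTop (𝓝 0) := by
    have : Tendsto (fun n : ℕ => ((n : ℝ) + n)) atTop atTop :=
      Tendsto.atTop_add_atTop tendsto_natCast_atTop_atTop tendsto_natCast_atTop_atTop
    have := hx2.comp this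
    simpa using (f.continuous.tendsto 0).comp this |>.congr (by simp)
  have h2 : ∀ᶠ n : ℕ in atTop, |f (S ((n : ℝ) + n) (C x))| ≤ ε := by
    have := h2'.eventually (Metric.ball_mem_nhds (0 : ℝ) hεpos)
    filter_upwards [this] with n hn
    simpa [Real.dist_eq] using le_of_lt hn
  obtain ⟨n, hn1, hn2⟩ := (h1.and h2).exists
  have hk := key (n : ℝ) (Nat.cast_nonneg n)
  have hfz : f z = 2 * f (S (n : ℝ) (S (n : ℝ) x)) - f (S ((n : ℝ) + n) (C x)) := by
    rw [hk]; simp [two_smul]; ring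
  have hb1 : |f (S (n : ℝ) (S (n : ℝ) x))| ≤ ε := by
    have := hn1 (n : ℝ) (Nat.cast_nonneg n)
    simpa [hp, Seminorm.comp_apply, Real.norm_eq_abs] using this
  have hbound : |f z| ≤ 3 * ε := by
    rw [hfz]
    calc |2 * f (S (n : ℝ) (S (n : ℝ) x)) - f (S ((n : ℝ) + n) (C x))|
        ≤ |2 * f (S (n : ℝ) (S (n : ℝ) x))| + |f (S ((n : ℝ) + n) (C x))| := abs_sub _ _
      _ ≤ 2 * ε + ε := by
          rw [abs_mul]
          have : |(2:ℝ)| = 2 := by norm_num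
          rw [this]
          linarith [hb1, hn2]
      _ = 3 * ε := by ring
  rw [hε] at hbound
  have : |f z| > 0 := abs_pos.mpr hf
  linarith
end

section
/- Let X be a Hausdorff locally convex space, C : X → X linear, and (S(t))_{t≥0} a C-cosine family on X. If there is a function k : [0,∞) → (0,∞) with lim_{t→∞} k(t) = ∞ and inf_{t≥0} k(t) > 0 such that (k(t) S(t))_{t≥0} is sequentially equicontinuous, then C²x = 0 for all x ∈ X. -/
open Filter Topology

theorem ccosine_sq_eq_zero_of_weighted_seqEquicontinuous
    {X : Type*} [AddCommGroup X] [Module ℝ X] [TopologicalSpace X]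
    [IsTopologicalAddGroup X] [ContinuousSMul ℝ X] [T2Space X] [LocallyConvexSpace ℝ X]
    (C : X →ₗ[ℝ] X) (S : ℝ → X →ₗ[ℝ] X)
    (hS0 : S 0 = C)
    (hcos : ∀ t s : ℝ, 0 ≤ s → s ≤ t → ∀ y : X,
      (2 : ℝ) • S t (S s y) = S (t + s) (C y) + S (t - s) (C y))
    (k : ℝ → ℝ) (hkpos : ∀ t : ℝ, 0 ≤ t → 0 < k t)
    (hktop : Tendsto k atTop atTop)
    (hkinf : ∃ c : ℝ, 0 < c ∧ ∀ t : ℝ, 0 ≤ t → c ≤ k t)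
    (hseq : ∀ p : Seminorm ℝ X, Continuous p →
      ∀ u : ℕ → X, Tendsto u atTop (𝓝 0) →
        ∀ ε : ℝ, 0 < ε → ∀ᶠ n in atTop, ∀ t : ℝ, 0 ≤ t → p (k t • S t (u n)) ≤ ε) :
    ∀ x : X, C (C x) = 0 := by
  intro x
  have hws : WithSeminorms (gaugeSeminormFamily ℝ X) := with_gaugeSeminormFamily
  -- Step 1: every orbit decays like M / k t in each continuous seminorm
  have step1 : ∀ p : Seminorm ℝ X, Continuous p → ∀ y : X,
      ∃ M : ℝ, 0 ≤ M ∧ ∀ t : ℝ, 0 ≤ t → p (S t y) ≤ M / k t := by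
    intro p hp y
    have hu : Tendsto (fun n : ℕ => ((n : ℝ) + 1)⁻¹ • y) atTop (𝓝 0) := by
      have h0 : Tendsto (fun n : ℕ => ((n : ℝ) + 1)⁻¹) atTop (𝓝 0) :=
        tendsto_one_div_add_atTop_nhds_zero_nat.congr (by simp [one_div])
      simpa using h0.smul_const y
    obtain ⟨N, hN⟩ := (hseq p hp _ hu 1 one_pos).exists
    refine ⟨(N : ℝ) + 1, by positivity, fun t ht => ?_⟩
    have hkt := hkpos t ht
    have h1 := hN t ht
    have hne : ((N : ℝ) + 1) ≠ 0 := by positivity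
    have heq : p (k t • S t (((N : ℝ) + 1)⁻¹ • y))
        = k t * (((N : ℝ) + 1)⁻¹ * p (S t y)) := by
      rw [LinearMap.map_smul, smul_smul, map_smul_eq_mul]
      rw [Real.norm_eq_abs, abs_of_pos (by positivity), mul_assoc]
    rw [heq] at h1
    rw [le_div_iff₀ hkt]
    calc p (S t y) * k t
        = k t * (((N : ℝ) + 1)⁻¹ * p (S t y)) * ((N : ℝ) + 1) := by field_simp
      _ ≤ 1 * ((N : ℝ) + 1) := mul_le_mul_of_nonneg_right h1 (by positivity)
      _ = (N : ℝ) + 1 := one_mul _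
  -- Step 2: choose times with both k (t n) and k (2 * t n) large
  have step2 : ∀ n : ℕ, ∃ t : ℝ, 0 ≤ t ∧ ((n : ℝ) + 1) ≤ k t ∧ ((n : ℝ) + 1) ≤ k (2 * t) := by
    intro n
    obtain ⟨T, hT⟩ := (hktop.eventually_ge_atTop ((n : ℝ) + 1)).exists_forall_of_atTop
    refine ⟨max T 0, le_max_right _ _, hT _ (le_max_left _ _), hT _ ?_⟩
    have := le_max_right T 0
    nlinarith [le_max_left T 0]
  choose tn htn0 htn1 htn2 using step2
  -- Step 3: v n := S (tn n) x tends to 0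
  set v : ℕ → X := fun n => S (tn n) x with hv_def
  have hdecay : ∀ p : Seminorm ℝ X, Continuous p →
      Tendsto (fun n => p (v n)) atTop (𝓝 0) := by
    intro p hp
    obtain ⟨M, hM0, hM⟩ := step1 p hp x
    have hbound : ∀ n : ℕ, p (v n) ≤ M / ((n : ℝ) + 1) := fun n => by
      refine (hM (tn n) (htn0 n)).trans ?_
      exact div_le_div_of_nonneg_left hM0 (by positivity) (htn1 n)
    have hlim : Tendsto (fun n : ℕ => M / ((n : ℝ) + 1)) atTop (𝓝 0) := by
      simpa using (tendsto_one_div_add_atTop_nhds_zero_nat.const_mul M).congr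
        (fun n => by rw [mul_one_div])
    exact squeeze_zero (fun n => apply_nonneg p _) hbound hlim
  have hv0 : Tendsto v atTop (𝓝 0) := by
    rw [hws.tendsto_nhds]
    intro i ε hε
    have := hdecay (gaugeSeminormFamily ℝ X i) (hws.continuous_seminorm i)
    filter_upwards [this.eventually (gt_mem_nhds hε)] with n hn
    simpa [sub_zero] using hn
  -- Step 4: every continuous seminorm kills C (C x)
  have claim : ∀ p : Seminorm ℝ X, Continuous p → ∀ ε : ℝ, 0 < ε → p (C (C x)) < ε := by
    intro p hp ε hε
    obtain ⟨M, hM0, hM⟩ := step1 p hp (C x)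
    have h4 : (0 : ℝ) < ε / 4 := by linarith
    have hMev : ∀ᶠ n : ℕ in atTop, M / ((n : ℝ) + 1) < ε / 4 := by
      have hlim : Tendsto (fun n : ℕ => M / ((n : ℝ) + 1)) atTop (𝓝 0) := by
        simpa using (tendsto_one_div_add_atTop_nhds_zero_nat.const_mul M).congr
          (fun n => by rw [mul_one_div])
      exact hlim.eventually (gt_mem_nhds h4)
    obtain ⟨n, hn1, hn2⟩ := ((hseq p hp v hv0 (ε / 4) h4).and hMev).exists
    set t := tn n
    have ht0 : 0 ≤ t := htn0 n
    have hkt : (0 : ℝ) < k t := hkpos t ht0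
    have hid : C (C x) = (2 : ℝ) • S t (S t x) - S (2 * t) (C x) := by
      have h := hcos t t ht0 le_rfl x
      rw [sub_self, hS0, ← two_mul] at h
      rw [h]; abel
    have hterm1 : p (S t (v n)) ≤ ε / 4 / k t := by
      have h1 := hn1 t ht0
      have heq : p (k t • S t (v n)) = k t * p (S t (v n)) := by
        rw [map_smul_eq_mul, Real.norm_eq_abs, abs_of_pos hkt]
      rw [heq] at h1
      rw [le_div_iff₀ hkt]
      linarith [mul_comm (k t) (p (S t (v n)))]
    have hk1 : (1 : ℝ) ≤ k t := le_trans (by linarith [Nat.cast_nonneg (α := ℝ) n]) (htn1 n)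
    have hterm1' : p (S t (v n)) ≤ ε / 4 := hterm1.trans (div_le_self h4.le hk1)
    have hterm2 : p (S (2 * t) (C x)) ≤ M / ((n : ℝ) + 1) := by
      refine (hM (2 * t) (by linarith)).trans ?_
      exact div_le_div_of_nonneg_left hM0 (by positivity) (htn2 n)
    calc p (C (C x)) = p ((2 : ℝ) • S t (S t x) - S (2 * t) (C x)) := by rw [hid]
      _ ≤ p ((2 : ℝ) • S t (S t x)) + p (S (2 * t) (C x)) := map_sub_le_add p _ _
      _ = 2 * p (S t (v n)) + p (S (2 * t) (C x)) := by
          rw [map_smul_eq_mul, Real.norm_eq_abs]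
          norm_num [hv_def]
          rfl
      _ < ε := by linarith
  -- Step 5: conclude using T2
  have hconst : Tendsto (fun _ : ℕ => C (C x)) atTop (𝓝 0) := by
    rw [hws.tendsto_nhds]
    intro i ε hε
    filter_upwards with n
    simpa [sub_zero] using
      claim (gaugeSeminormFamily ℝ X i) (hws.continuous_seminorm i) ε hε
  exact tendsto_nhds_unique tendsto_const_nhds hconst
end

section
/- Let X be a nonzero Hausdorff locally convex space, C : X → X linear with C² injective, and (S(t))_{t≥0} a C-cosine family on X. If there is α ∈ ℝ such that (e^{−αt} S(t))_{t≥0} is sequentially equicontinuous, then α ≥ 0. -/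
open Filter Topology

theorem ccosine_exp_type_nonneg
    {X : Type*} [AddCommGroup X] [Module ℝ X] [TopologicalSpace X]
    [IsTopologicalAddGroup X] [ContinuousSMul ℝ X] [T2Space X] [LocallyConvexSpace ℝ X]
    [Nontrivial X]
    (C : X →ₗ[ℝ] X) (hC : Function.Injective fun x => C (C x))
    (S : ℝ → X →ₗ[ℝ] X)
    (hS0 : S 0 = C)
    (hcos : ∀ t s : ℝ, 0 ≤ s → s ≤ t → ∀ y : X,
      (2 : ℝ) • S t (S s y) = S (t + s) (C y) + S (t - s) (C y))
    (α : ℝ)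
    (hseq : ∀ p : Seminorm ℝ X, Continuous p →
      ∀ u : ℕ → X, Tendsto u atTop (𝓝 0) →
        ∀ ε : ℝ, 0 < ε → ∀ᶠ n in atTop, ∀ t : ℝ, 0 ≤ t →
          p (Real.exp (-(α * t)) • S t (u n)) ≤ ε) :
    0 ≤ α := by
  by_contra hcon
  push_neg at hcon
  have hWS : WithSeminorms (gaugeSeminormFamily ℝ X) := with_gaugeSeminormFamily
  set P := gaugeSeminormFamily ℝ X with hP
  -- Step 1: pointwise exponential bound for each continuous seminorm
  have bound : ∀ p : Seminorm ℝ X, Continuous p → ∀ x : X, ∃ M : ℝ, 0 ≤ M ∧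
      ∀ t : ℝ, 0 ≤ t → p (S t x) ≤ M * Real.exp (α * t) := by
    intro p hp x
    have hu : Tendsto (fun n : ℕ => ((n : ℝ) + 1)⁻¹ • x) atTop (𝓝 0) := by
      have h1 : Tendsto (fun n : ℕ => ((n : ℝ) + 1)⁻¹) atTop (𝓝 0) :=
        tendsto_one_div_add_atTop_nhds_zero_nat.congr (by intro n; rw [one_div])
      simpa using h1.smul_const x
    obtain ⟨n, hn⟩ := (hseq p hp _ hu 1 one_pos).exists
    refine ⟨(n : ℝ) + 1, by positivity, fun t ht => ?_⟩
    have h := hn t ht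
    have hE : (0 : ℝ) < Real.exp (α * t) := Real.exp_pos _
    have hn1 : (0 : ℝ) < (n : ℝ) + 1 := by positivity
    rw [map_smul_eq_mul, map_smul, map_smul_eq_mul, Real.norm_eq_abs, Real.norm_eq_abs,
      abs_of_pos (Real.exp_pos _), abs_of_pos (inv_pos.mpr hn1),
      Real.exp_neg] at h
    have h2 := mul_le_mul_of_nonneg_left h (mul_pos hn1 hE).le
    have heq : ((n : ℝ) + 1) * Real.exp (α * t) *
        ((Real.exp (α * t))⁻¹ * (((n : ℝ) + 1)⁻¹ * p (S t x))) = p (S t x) := by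
      field_simp
    rw [heq, mul_one] at h2
    exact h2
  -- Step 2: ∀ y, C (C y) = 0
  have key : ∀ y : X, C (C y) = 0 := by
    intro y
    -- the sequence u' n = S n y tends to 0
    have htend : Tendsto (fun n : ℕ => S (n : ℝ) y) atTop (𝓝 0) := by
      rw [hWS.tendsto_nhds]
      intro i ε hε
      obtain ⟨M, hM, hMb⟩ := bound (P i) (hWS.continuous_seminorm i) y
      have hlt : Tendsto (fun n : ℕ => M * Real.exp α ^ n) atTop (𝓝 0) := by
        have := tendsto_pow_atTop_nhds_zero_of_lt_one (Real.exp_nonneg α)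
          (Real.exp_lt_one_iff.mpr hcon)
        simpa using this.const_mul M
      filter_upwards [hlt.eventually (gt_mem_nhds hε)] with n hn
      have h1 : P i (S (n : ℝ) y - 0) ≤ M * Real.exp (α * n) := by
        rw [sub_zero]; exact hMb _ (Nat.cast_nonneg n)
      have h2 : Real.exp (α * n) = Real.exp α ^ n := by
        rw [mul_comm, Real.exp_nat_mul]
      rw [h2] at h1
      exact lt_of_le_of_lt h1 hn
    -- each gauge seminorm of C (C y) vanishes
    have hvan : ∀ i, P i (C (C y)) = 0 := by
      intro i
      set p := P i with hpdef
      have hpc : Continuous p := hWS.continuous_seminorm i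
      obtain ⟨M, hM, hMb⟩ := bound p hpc (C y)
      have hle : ∀ ε : ℝ, 0 < ε → p (C (C y)) ≤ 3 * ε := by
        intro ε hε
        have hlt : Tendsto (fun n : ℕ => M * Real.exp α ^ n) atTop (𝓝 0) := by
          have := tendsto_pow_atTop_nhds_zero_of_lt_one (Real.exp_nonneg α)
            (Real.exp_lt_one_iff.mpr hcon)
          simpa using this.const_mul M
        have hev1 := hseq p hpc _ htend ε hε
        have hev2 : ∀ᶠ n : ℕ in atTop, M * Real.exp α ^ n ≤ ε :=
          hlt.eventually (ge_mem_nhds hε)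
        obtain ⟨n, hn1, hn2⟩ := (hev1.and hev2).exists
        -- cosine identity at t = s = n
        have hid := hcos (n : ℝ) (n : ℝ) (Nat.cast_nonneg n) le_rfl y
        rw [sub_self, hS0] at hid
        have hCC : C (C y) = (2 : ℝ) • S (n : ℝ) (S (n : ℝ) y) - S ((n : ℝ) + n) (C y) := by
          rw [hid]; abel
        -- bound the first term
        have hb1 : p (S (n : ℝ) (S (n : ℝ) y)) ≤ ε := by
          have h := hn1 (n : ℝ) (Nat.cast_nonneg n)
          rw [map_smul_eq_mul, Real.norm_eq_abs,
            abs_of_pos (Real.exp_pos _)] at h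
          have hE1 : (1 : ℝ) ≤ Real.exp (-(α * n)) := by
            rw [Real.one_le_exp_iff]
            have : α * n ≤ 0 := mul_nonpos_of_nonpos_of_nonneg hcon.le (Nat.cast_nonneg n)
            linarith
          have hp0 : 0 ≤ p (S (n : ℝ) (S (n : ℝ) y)) := apply_nonneg _ _
          nlinarith
        -- bound the second term
        have hb2 : p (S ((n : ℝ) + n) (C y)) ≤ ε := by
          have h := hMb ((n : ℝ) + n) (by positivity)
          have hmono : Real.exp (α * ((n : ℝ) + n)) ≤ Real.exp (α * n) := by
            apply Real.exp_le_exp.mpr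
            nlinarith [Nat.cast_nonneg (α := ℝ) n]
          have h2 : Real.exp (α * n) = Real.exp α ^ n := by
            rw [mul_comm, Real.exp_nat_mul]
          calc p (S ((n : ℝ) + n) (C y)) ≤ M * Real.exp (α * ((n : ℝ) + n)) := h
            _ ≤ M * Real.exp (α * n) := by nlinarith [Real.exp_pos (α * ((n:ℝ)+n))]
            _ = M * Real.exp α ^ n := by rw [h2]
            _ ≤ ε := hn2
        calc p (C (C y)) = p ((2 : ℝ) • S (n : ℝ) (S (n : ℝ) y) - S ((n : ℝ) + n) (C y)) := by
              rw [hCC]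
          _ ≤ p ((2 : ℝ) • S (n : ℝ) (S (n : ℝ) y)) + p (S ((n : ℝ) + n) (C y)) :=
              map_sub_le_add _ _ _
          _ = 2 * p (S (n : ℝ) (S (n : ℝ) y)) + p (S ((n : ℝ) + n) (C y)) := by
              rw [map_smul_eq_mul]; norm_num
          _ ≤ 3 * ε := by linarith
      have h0 : p (C (C y)) ≤ 0 := by
        by_contra h
        push_neg at h
        have := hle (p (C (C y)) / 4) (by linarith)
        linarith
      exact le_antisymm h0 (apply_nonneg _ _)
    by_contra hne
    obtain ⟨i, hi⟩ := hWS.separating_of_T1 _ hne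
    exact hi (hvan i)
  -- Step 3: conclude X is trivial, contradiction
  have hall : ∀ y : X, y = 0 := by
    intro y
    apply hC
    simp [key y]
  obtain ⟨a, b, hab⟩ := exists_pair_ne X
  exact hab ((hall a).trans (hall b).symm)
end

section
/- Let X be a Hausdorff locally convex space and (S(t))_{t≥0} a cosine family on X (S(0) = id, 2S(t)S(s) = S(t+s) + S(t−s) for t ≥ s ≥ 0) with S(t)S(s) = S(s)S(t) for all t, s ≥ 0. Then (S(t))_{t≥0} is locally equicontinuous if and only if there exists t₀ > 0 such that (S(t))_{t ∈ [0,t₀]} is equicontinuous. -/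
open Filter Topology

/-- Equicontinuity of the family `(S t)` for parameters `t` in the set `M`. -/
def EquicontOn {X : Type*} [AddCommGroup X] [Module ℝ X] [TopologicalSpace X]
    (S : ℝ → X →ₗ[ℝ] X) (M : Set ℝ) : Prop :=
  ∀ p : Seminorm ℝ X, Continuous p →
    ∃ q : Seminorm ℝ X, Continuous q ∧
      ∃ K : ℝ, 0 ≤ K ∧ ∀ t ∈ M, ∀ x : X, p (S t x) ≤ K * q x

lemma EquicontOn.mono {X : Type*} [AddCommGroup X] [Module ℝ X] [TopologicalSpace X]
    {S : ℝ → X →ₗ[ℝ] X} {M N : Set ℝ} (h : EquicontOn S N) (hMN : M ⊆ N) :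
    EquicontOn S M := by
  intro p hp
  obtain ⟨q, hq, K, hK, hb⟩ := h p hp
  exact ⟨q, hq, K, hK, fun t ht x => hb t (hMN ht) x⟩

lemma equicont_step {X : Type*} [AddCommGroup X] [Module ℝ X] [TopologicalSpace X]
    (S : ℝ → X →ₗ[ℝ] X)
    (hcos : ∀ t s : ℝ, 0 ≤ s → s ≤ t → ∀ x : X,
      (2 : ℝ) • S t (S s x) = S (t + s) x + S (t - s) x)
    {a t₀ : ℝ} (ht₀ : 0 ≤ t₀) (hta : t₀ ≤ a)
    (h : EquicontOn S (Set.Icc 0 a)) : EquicontOn S (Set.Icc 0 (a + t₀)) := by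
  intro p hp
  obtain ⟨q, hq, K, hK, hKb⟩ := h p hp
  obtain ⟨r, hr, L, hL, hLb⟩ := h q hq
  refine ⟨q + r, ?_, 2 * K * L + K, by positivity, ?_⟩
  · rw [Seminorm.coe_add]
    exact hq.add hr
  · intro t ht x
    have hqx : 0 ≤ q x := apply_nonneg q x
    have hrx : 0 ≤ r x := apply_nonneg r x
    have hadd : (q + r) x = q x + r x := rfl
    rcases le_or_gt t a with h1 | h1
    · have := hKb t ⟨ht.1, h1⟩ x
      rw [hadd]
      nlinarith [mul_nonneg (mul_nonneg hK hL) hrx, mul_nonneg (mul_nonneg hK hL) hqx,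
        mul_nonneg hK hrx, mul_nonneg hK hqx]
    · set s := t - t₀ with hs
      have hs0 : 0 ≤ s := by simp only [hs]; linarith
      have hsa : s ≤ a := by simp only [hs]; linarith [ht.2]
      set b := max t₀ s with hb
      set c := min t₀ s with hc
      have hc0 : 0 ≤ c := le_min ht₀ hs0
      have hcb : c ≤ b := min_le_max
      have hbc : b + c = t := by
        rw [hb, hc, max_add_min, hs]; ring
      have hbmem : b ∈ Set.Icc 0 a := ⟨le_trans ht₀ (le_max_left _ _), max_le hta hsa⟩
      have hcmem : c ∈ Set.Icc 0 a := ⟨hc0, le_trans (min_le_left _ _) hta⟩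
      have hdmem : b - c ∈ Set.Icc 0 a := ⟨by linarith, by linarith [hbmem.2, hc0]⟩
      have key := hcos b c hc0 hcb x
      rw [hbc] at key
      have hrepr : S t x = (2 : ℝ) • S b (S c x) - S (b - c) x := by
        rw [key]; abel
      rw [hrepr]
      have h1 : p ((2 : ℝ) • S b (S c x) - S (b - c) x) ≤
          p ((2 : ℝ) • S b (S c x)) + p (S (b - c) x) := map_sub_le_add p _ _
      have h2 : p ((2 : ℝ) • S b (S c x)) = 2 * p (S b (S c x)) := by
        rw [map_smul_eq_mul]; norm_num
      have h3 : p (S b (S c x)) ≤ K * q (S c x) := hKb b hbmem _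
      have h4 : q (S c x) ≤ L * r x := hLb c hcmem x
      have h5 : p (S (b - c) x) ≤ K * q x := hKb _ hdmem x
      have h6 : K * q (S c x) ≤ K * (L * r x) := mul_le_mul_of_nonneg_left h4 hK
      rw [hadd]
      nlinarith [mul_nonneg (mul_nonneg hK hL) hqx, mul_nonneg hK hrx]
theorem cosine_locEquicont_iff_equicont_on_interval
    {X : Type*} [AddCommGroup X] [Module ℝ X] [TopologicalSpace X]
    [IsTopologicalAddGroup X] [ContinuousSMul ℝ X] [T2Space X] [LocallyConvexSpace ℝ X]
    (S : ℝ → X →ₗ[ℝ] X)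
    (hS0 : S 0 = LinearMap.id)
    (hcos : ∀ t s : ℝ, 0 ≤ s → s ≤ t → ∀ x : X,
      (2 : ℝ) • S t (S s x) = S (t + s) x + S (t - s) x)
    (hcomm : ∀ t s : ℝ, 0 ≤ t → 0 ≤ s → ∀ x : X, S t (S s x) = S s (S t x)) :
    (∀ M : Set ℝ, M ⊆ Set.Ici 0 → IsCompact M → EquicontOn S M) ↔
      ∃ t₀ : ℝ, 0 < t₀ ∧ EquicontOn S (Set.Icc 0 t₀) := by
  constructor
  · intro h
    exact ⟨1, one_pos, h (Set.Icc 0 1) (fun x hx => hx.1) isCompact_Icc⟩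
  · rintro ⟨t₀, ht₀, h⟩
    have key : ∀ n : ℕ, EquicontOn S (Set.Icc 0 (t₀ + n * t₀)) := by
      intro n
      induction n with
      | zero => simpa using h
      | succ n ih =>
        have : (t₀ + (n + 1 : ℕ) * t₀ : ℝ) = (t₀ + n * t₀) + t₀ := by push_cast; ring
        rw [this]
        exact equicont_step S hcos ht₀.le (le_add_of_nonneg_right (by positivity)) ih
    intro M hM hMc
    rcases hMc.bddAbove with ⟨C, hC⟩
    obtain ⟨n, hn⟩ := exists_nat_ge (C / t₀)
    have hCn : C ≤ t₀ + n * t₀ := by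
      have : C ≤ n * t₀ := by
        rw [div_le_iff₀ ht₀] at hn; linarith
      linarith
    exact (key n).mono fun t ht => ⟨hM ht, le_trans (hC ht) hCn⟩
end

section
/- Let (X, ‖·‖) be a normed space and τ ⊆ τ_{‖·‖} a Hausdorff locally convex topology on X such that τ-bounded sets are ‖·‖-bounded. If a family (S(t))_{t∈I} of linear maps from X to X is sequentially τ-equicontinuous, then each S(t) is a bounded linear operator on (X, ‖·‖) and sup_{t∈I} ‖S(t)‖ < ∞. -/
open Filter Topology

/-- Wrapper for an auxiliary topology on `X`, so that it is not picked up by instance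
resolution. -/
structure AuxTopology (X : Type*) where
  top : TopologicalSpace X

/-- In a locally convex topological vector space, a set on which every continuous seminorm
is bounded is von Neumann bounded. -/
theorem aux_isVonNBounded {X : Type*} [AddCommGroup X] [Module ℝ X] (t : TopologicalSpace X)
    (hgrp : @IsTopologicalAddGroup X t _) (hsmul : @ContinuousSMul ℝ X _ _ t)
    (hlc : @LocallyConvexSpace ℝ X _ _ _ _ t) (A : Set X)
    (h : ∀ p : Seminorm ℝ X, @Continuous X ℝ t _ (fun x => p x) → ∃ r, ∀ x ∈ A, p x < r) :
    @Bornology.IsVonNBounded ℝ X _ _ _ t A := by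
  letI := t
  haveI := hgrp; haveI := hsmul; haveI := hlc
  have hws : WithSeminorms (gaugeSeminormFamily ℝ X) := with_gaugeSeminormFamily
  rw [hws.isVonNBounded_iff_seminorm_bounded]
  intro i
  obtain ⟨r, hr⟩ := h (gaugeSeminormFamily ℝ X i) (hws.continuous_seminorm i)
  refine ⟨max r 1, lt_max_of_lt_right one_pos, fun x hx => (hr x hx).trans_le (le_max_left _ _)⟩

theorem norm_bounded_of_seq_tau_equicontinuous
    {X : Type*} [NormedAddCommGroup X] [NormedSpace ℝ X]
    (τ : AuxTopology X)
    (hle : (inferInstance : TopologicalSpace X) ≤ τ.top)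
    (hgrp : @IsTopologicalAddGroup X τ.top _) (hsmul : @ContinuousSMul ℝ X _ _ τ.top)
    (hT2 : @T2Space X τ.top) (hlc : @LocallyConvexSpace ℝ X _ _ _ _ τ.top)
    (hbdd : ∀ s : Set X, @Bornology.IsVonNBounded ℝ X _ _ _ τ.top s → Bornology.IsBounded s)
    {I : Type*} (S : I → X →ₗ[ℝ] X)
    (hseq : ∀ p : Seminorm ℝ X, (@Continuous X ℝ τ.top _ fun x => p x) →
      ∀ u : ℕ → X, Tendsto u atTop (@nhds X τ.top 0) →
        ∀ ε : ℝ, 0 < ε → ∀ᶠ n in atTop, ∀ t : I, p (S t (u n)) ≤ ε) :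
    ∃ K : ℝ, ∀ t : I, ∀ x : X, ‖S t x‖ ≤ K * ‖x‖ := by
  by_contra hcon
  push_neg at hcon
  choose f g hfg using hcon
  set t : ℕ → I := fun n => f (((n : ℝ) + 1) ^ 2)
  set x : ℕ → X := fun n => g (((n : ℝ) + 1) ^ 2)
  have hx : ∀ n : ℕ, ((n : ℝ) + 1) ^ 2 * ‖x n‖ < ‖S (t n) (x n)‖ := fun n =>
    hfg (((n : ℝ) + 1) ^ 2)
  have hxne : ∀ n : ℕ, ‖x n‖ ≠ 0 := by
    intro n hzero
    have := hx n
    rw [hzero, mul_zero] at this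
    have hx0 : x n = 0 := norm_eq_zero.mp hzero
    rw [hx0, map_zero, norm_zero] at this
    exact lt_irrefl 0 this
  have hxpos : ∀ n : ℕ, 0 < ‖x n‖ := fun n =>
    lt_of_le_of_ne (norm_nonneg _) (Ne.symm (hxne n))
  have hnpos : ∀ n : ℕ, (0 : ℝ) < (n : ℝ) + 1 := fun n => by positivity
  set c : ℕ → ℝ := fun n => (((n : ℝ) + 1) * ‖x n‖)⁻¹
  have hcpos : ∀ n : ℕ, 0 < c n := fun n => by
    have := hxpos n; have := hnpos n; positivity
  set y : ℕ → X := fun n => c n • x n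
  have hynorm : ∀ n : ℕ, ‖y n‖ = ((n : ℝ) + 1)⁻¹ := by
    intro n
    show ‖c n • x n‖ = _
    rw [norm_smul, Real.norm_eq_abs, abs_of_pos (hcpos n)]
    have h1 := hxne n
    have h2 := (hnpos n).ne'
    simp only [c]
    field_simp
  -- y tends to 0 in norm, hence in τ
  have hy0 : Tendsto y atTop (nhds (0 : X)) := by
    rw [tendsto_zero_iff_norm_tendsto_zero]
    have : (fun n : ℕ => ‖y n‖) = fun n : ℕ => 1 / ((n : ℝ) + 1) := by
      funext n; rw [hynorm n, one_div]
    rw [this]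
    exact tendsto_one_div_add_atTop_nhds_zero_nat
  have hyτ : Tendsto y atTop (@nhds X τ.top 0) := hy0.mono_right (nhds_mono hle)
  -- lower bound on the norms of S (t n) (y n)
  have hlow : ∀ n : ℕ, (n : ℝ) + 1 < ‖S (t n) (y n)‖ := by
    intro n
    have : S (t n) (y n) = c n • S (t n) (x n) := by
      show S (t n) (c n • x n) = _; rw [map_smul]
    rw [this, norm_smul, Real.norm_eq_abs, abs_of_pos (hcpos n)]
    have h1 : c n * (((n : ℝ) + 1) ^ 2 * ‖x n‖) < c n * ‖S (t n) (x n)‖ :=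
      (mul_lt_mul_iff_right₀ (hcpos n)).mpr (hx n)
    calc (n : ℝ) + 1 = c n * (((n : ℝ) + 1) ^ 2 * ‖x n‖) := by
          have := hxne n; have := (hnpos n).ne'; simp only [c]; field_simp
      _ < _ := h1
  -- the set of values is τ-von Neumann bounded
  set A : Set X := Set.range fun n => S (t n) (y n)
  have hA : @Bornology.IsVonNBounded ℝ X _ _ _ τ.top A := by
    apply aux_isVonNBounded τ.top hgrp hsmul hlc
    intro p hp
    obtain ⟨N, hN⟩ := eventually_atTop.mp (hseq p hp y hyτ 1 one_pos)
    refine ⟨2 + ∑ k ∈ Finset.range N, p (S (t k) (y k)), ?_⟩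
    rintro _ ⟨n, rfl⟩
    have hsum : (0 : ℝ) ≤ ∑ k ∈ Finset.range N, p (S (t k) (y k)) :=
      Finset.sum_nonneg fun k _ => apply_nonneg _ _
    rcases le_or_gt N n with hn | hn
    · have := hN n hn (t n)
      linarith
    · have hle' : p (S (t n) (y n)) ≤ ∑ k ∈ Finset.range N, p (S (t k) (y k)) :=
        Finset.single_le_sum (f := fun k => p (S (t k) (y k)))
          (fun k _ => apply_nonneg p _) (Finset.mem_range.mpr hn)
      linarith
  -- hence norm bounded, contradiction
  obtain ⟨C, hC⟩ := (isBounded_iff_forall_norm_le).mp (hbdd A hA)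
  obtain ⟨n, hn⟩ := exists_nat_gt C
  have h1 : ‖S (t n) (y n)‖ ≤ C := hC _ ⟨n, rfl⟩
  have h2 := hlow n
  have : (n : ℝ) ≤ C := by linarith
  linarith
end

section
/- Let (X, ‖·‖) be a Banach space, τ a Hausdorff locally convex topology on X such that τ-bounded sets are ‖·‖-bounded, I a Hausdorff topological space, and (S(t))_{t∈I} a family of bounded operators on X. If the map t ↦ S(t)x is τ-continuous for every x ∈ X, then for every compact set M ⊆ I we have sup_{t∈M} ‖S(t)‖ < ∞. -/
open Filter Topology

theorem aux_compact_isVonNBounded {X : Type*} [AddCommGroup X] [Module ℝ X]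
    [TopologicalSpace X] [IsTopologicalAddGroup X] [ContinuousSMul ℝ X]
    {s : Set X} (hs : IsCompact s) : Bornology.IsVonNBounded ℝ s := by
  letI : UniformSpace X := IsTopologicalAddGroup.rightUniformSpace X
  haveI : IsUniformAddGroup X := isUniformAddGroup_of_addCommGroup
  exact hs.totallyBounded.isVonNBounded ℝ

theorem locally_bounded_of_tau_strongly_continuous
    {X : Type*} [NormedAddCommGroup X] [NormedSpace ℝ X] [CompleteSpace X]
    (τ : AuxTopology X)
    (hgrp : @IsTopologicalAddGroup X τ.top _) (hsmul : @ContinuousSMul ℝ X _ _ τ.top)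
    (hT2 : @T2Space X τ.top) (hlc : @LocallyConvexSpace ℝ X _ _ _ _ τ.top)
    (hbdd : ∀ s : Set X, @Bornology.IsVonNBounded ℝ X _ _ _ τ.top s → Bornology.IsBounded s)
    {I : Type*} [TopologicalSpace I] [T2Space I]
    (S : I → X →L[ℝ] X)
    (hcont : ∀ x : X, @Continuous I X _ τ.top fun t => S t x) :
    ∀ M : Set I, IsCompact M → ∃ K : ℝ, ∀ t ∈ M, ‖S t‖ ≤ K := by
  intro M hM
  have hpt : ∀ x : X, ∃ C : ℝ, ∀ t : M, ‖S t x‖ ≤ C := by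
    intro x
    have hcomp : @IsCompact X τ.top ((fun t => S t x) '' M) :=
      @IsCompact.image I X _ τ.top _ _ hM (hcont x)
    have hvb : @Bornology.IsVonNBounded ℝ X _ _ _ τ.top ((fun t => S t x) '' M) :=
      @aux_compact_isVonNBounded X _ _ τ.top hgrp hsmul _ hcomp
    have hb : Bornology.IsBounded ((fun t => S t x) '' M) := hbdd _ hvb
    obtain ⟨C, hC⟩ := (isBounded_iff_forall_norm_le).mp hb
    exact ⟨C, fun t => hC _ ⟨t, t.2, rfl⟩⟩
  obtain ⟨C', hC'⟩ := banach_steinhaus (g := fun t : M => S t) hpt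
  exact ⟨C', fun t ht => hC' ⟨t, ht⟩⟩
end

section
/- Let (X, ‖·‖) be a Banach space, τ a Hausdorff locally convex topology on X such that τ-bounded sets are ‖·‖-bounded, and (S(t))_{t≥0} a cosine family of bounded operators on X (S(0) = id, 2S(t)S(s) = S(t+s) + S(t−s) for t ≥ s ≥ 0). If t ↦ S(t)x is τ-continuous for every x ∈ X, then there exist K ≥ 1 and ω ≥ 0 such that ‖S(t)‖ ≤ K e^{ωt} for all t ≥ 0. -/
open Filter Topology

theorem cosine_exponentially_bounded_of_tau_strongly_continuous
    {X : Type*} [NormedAddCommGroup X] [NormedSpace ℝ X] [CompleteSpace X]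
    (τ : AuxTopology X)
    (hgrp : @IsTopologicalAddGroup X τ.top _) (hsmul : @ContinuousSMul ℝ X _ _ τ.top)
    (hT2 : @T2Space X τ.top) (hlc : @LocallyConvexSpace ℝ X _ _ _ _ τ.top)
    (hbdd : ∀ s : Set X, @Bornology.IsVonNBounded ℝ X _ _ _ τ.top s → Bornology.IsBounded s)
    (S : ℝ → X →L[ℝ] X)
    (hS0 : S 0 = ContinuousLinearMap.id ℝ X)
    (hcos : ∀ t s : ℝ, 0 ≤ s → s ≤ t → ∀ x : X,
      (2 : ℝ) • S t (S s x) = S (t + s) x + S (t - s) x)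
    (hcont : ∀ x : X, @ContinuousOn ℝ X _ τ.top (fun t => S t x) (Set.Ici 0)) :
    ∃ K : ℝ, 1 ≤ K ∧ ∃ ω : ℝ, 0 ≤ ω ∧ ∀ t : ℝ, 0 ≤ t → ‖S t‖ ≤ K * Real.exp (ω * t) := by
  classical
  -- Step 1: pointwise bound on [0,1] via τ-compactness of orbits
  have hpt : ∀ x : X, ∃ C : ℝ, ∀ i : Set.Icc (0:ℝ) 1, ‖S i x‖ ≤ C := by
    intro x
    have hc : @ContinuousOn ℝ X _ τ.top (fun t => S t x) (Set.Icc 0 1) :=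
      @ContinuousOn.mono ℝ X _ τ.top _ _ _ (hcont x) (fun t ht => ht.1)
    have hcomp : @IsCompact X τ.top ((fun t => S t x) '' Set.Icc 0 1) :=
      @IsCompact.image_of_continuousOn ℝ X _ τ.top _ _ isCompact_Icc hc
    have hvn : @Bornology.IsVonNBounded ℝ X _ _ _ τ.top
        ((fun t => S t x) '' Set.Icc 0 1) := by
      letI := τ.top
      letI : UniformSpace X := IsTopologicalAddGroup.rightUniformSpace X
      haveI : IsUniformAddGroup X := isUniformAddGroup_of_addCommGroup
      exact hcomp.totallyBounded.isVonNBounded ℝ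
    obtain ⟨C, hC⟩ := isBounded_iff_forall_norm_le.mp (hbdd _ hvn)
    exact ⟨C, fun i => hC _ ⟨(i : ℝ), i.2, rfl⟩⟩
  obtain ⟨M, hM⟩ := banach_steinhaus (g := fun i : Set.Icc (0:ℝ) 1 => S i) hpt
  set M' : ℝ := max M 1 with hM'def
  have hM'1 : 1 ≤ M' := le_max_right _ _
  have hbound1 : ∀ t : ℝ, 0 ≤ t → t ≤ 1 → ‖S t‖ ≤ M' := fun t h0 h1 =>
    (hM ⟨t, h0, h1⟩).trans (le_max_left _ _)
  set b : ℝ := 3 * M' with hbdef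
  have hb3 : (3 : ℝ) ≤ b := by simp only [hbdef]; linarith
  have hb1 : (1 : ℝ) ≤ b := by linarith
  have hb0 : (0 : ℝ) < b := by linarith
  -- Step 2: doubling bound
  have key : ∀ n : ℕ, ∀ t : ℝ, 0 ≤ t → t ≤ 2 ^ n → ‖S t‖ ≤ (b ^ (2 ^ n) - 1) / 2 := by
    intro n
    induction n with
    | zero =>
      intro t h0 h1
      simp only [pow_zero, pow_one] at h1 ⊢
      have := hbound1 t h0 h1
      simp only [hbdef]; linarith
    | succ n ih =>
      intro t h0 h1
      have hpowpos : (3:ℝ) ≤ b ^ (2 ^ n) := by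
        calc (3:ℝ) ≤ b := hb3
        _ = b ^ 1 := (pow_one b).symm
        _ ≤ b ^ (2 ^ n) := pow_le_pow_right₀ hb1 (Nat.one_le_two_pow)
      have hsq : b ^ (2 ^ (n + 1)) = (b ^ (2 ^ n)) ^ 2 := by
        rw [← pow_mul, pow_succ]
      rcases le_or_gt t (2 ^ n) with h | h
      · refine (ih t h0 h).trans ?_
        nlinarith [hpowpos]
      · have h2 : 0 ≤ t / 2 := by linarith
        have h3 : t / 2 ≤ 2 ^ n := by
          have h4 : (2:ℝ) ^ (n + 1) = 2 * 2 ^ n := by ring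
          rw [h4] at h1; linarith
        have hc := ih (t / 2) h2 h3
        set c := ‖S (t / 2)‖ with hcdef
        have hcnn : 0 ≤ c := norm_nonneg _
        have hop : ‖S t‖ ≤ 2 * c ^ 2 + 1 := by
          apply ContinuousLinearMap.opNorm_le_bound _ (by positivity)
          intro x
          have hx := hcos (t / 2) (t / 2) h2 le_rfl x
          rw [show t / 2 + t / 2 = t by ring, show t / 2 - t / 2 = (0:ℝ) by ring, hS0] at hx
          simp only [ContinuousLinearMap.id_apply] at hx
          have hst : S t x = (2:ℝ) • S (t / 2) (S (t / 2) x) - x := by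
            rw [hx]; abel
          rw [hst]
          calc ‖(2:ℝ) • S (t / 2) (S (t / 2) x) - x‖
              ≤ ‖(2:ℝ) • S (t / 2) (S (t / 2) x)‖ + ‖x‖ := norm_sub_le _ _
            _ = 2 * ‖S (t / 2) (S (t / 2) x)‖ + ‖x‖ := by
                rw [norm_smul]; norm_num
            _ ≤ 2 * (c * ‖S (t / 2) x‖) + ‖x‖ := by
                have := (S (t / 2)).le_opNorm (S (t / 2) x)
                linarith
            _ ≤ 2 * (c * (c * ‖x‖)) + ‖x‖ := by
                have := (S (t / 2)).le_opNorm x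
                nlinarith
            _ = (2 * c ^ 2 + 1) * ‖x‖ := by ring
        rw [hsq]
        nlinarith [hpowpos, hc, hcnn]
  -- Step 3: conclude exponential bound
  refine ⟨b, hb1, 2 * Real.log b, mul_nonneg (by norm_num) (Real.log_nonneg hb1), ?_⟩
  intro t ht
  -- choose n with t ≤ 2^n and 2^n ≤ 1 + 2t
  obtain ⟨n, hn1, hn2⟩ : ∃ n : ℕ, t ≤ 2 ^ n ∧ ((2:ℝ) ^ n : ℝ) ≤ 1 + 2 * t := by
    rcases le_or_gt t 1 with h | h
    · exact ⟨0, by simpa using h, by simp; linarith⟩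
    · refine ⟨⌈Real.logb 2 t⌉₊, ?_, ?_⟩
      · have hl : t = (2:ℝ) ^ (Real.logb 2 t) :=
          (Real.rpow_logb (by norm_num) (by norm_num) (by linarith)).symm
        calc t = (2:ℝ) ^ (Real.logb 2 t) := hl
          _ ≤ (2:ℝ) ^ ((⌈Real.logb 2 t⌉₊ : ℝ)) :=
              Real.rpow_le_rpow_of_exponent_le one_le_two (Nat.le_ceil _)
          _ = 2 ^ (⌈Real.logb 2 t⌉₊) := Real.rpow_natCast 2 _
      · have hl0 : 0 ≤ Real.logb 2 t := Real.logb_nonneg (by norm_num) h.le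
        have hceil : (⌈Real.logb 2 t⌉₊ : ℝ) < Real.logb 2 t + 1 := Nat.ceil_lt_add_one hl0
        calc ((2:ℝ) ^ ⌈Real.logb 2 t⌉₊ : ℝ) = (2:ℝ) ^ ((⌈Real.logb 2 t⌉₊ : ℝ)) :=
              (Real.rpow_natCast 2 _).symm
          _ ≤ (2:ℝ) ^ (Real.logb 2 t + 1) :=
              Real.rpow_le_rpow_of_exponent_le one_le_two hceil.le
          _ = (2:ℝ) ^ (Real.logb 2 t) * 2 := by
              rw [Real.rpow_add (by norm_num), Real.rpow_one]
          _ = t * 2 := by rw [Real.rpow_logb (by norm_num) (by norm_num) (by linarith)]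
          _ ≤ 1 + 2 * t := by linarith
  have h1 := key n t ht hn1
  have h2 : (b : ℝ) ^ (2 ^ n : ℕ) = b ^ ((2 ^ n : ℕ) : ℝ) := (Real.rpow_natCast b _).symm
  have h3 : b ^ ((2 ^ n : ℕ) : ℝ) ≤ b ^ (1 + 2 * t) := by
    apply Real.rpow_le_rpow_of_exponent_le hb1
    push_cast
    exact hn2
  have h4 : b ^ (1 + 2 * t) = b * Real.exp (2 * Real.log b * t) := by
    rw [Real.rpow_add hb0, Real.rpow_one, Real.rpow_def_of_pos hb0]
    ring_nf
  have h5 : ((b : ℝ) ^ (2 ^ n : ℕ) - 1) / 2 ≤ (b : ℝ) ^ (2 ^ n : ℕ) := by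
    have : (0:ℝ) ≤ (b : ℝ) ^ (2 ^ n : ℕ) := by positivity
    linarith
  calc ‖S t‖ ≤ ((b : ℝ) ^ (2 ^ n : ℕ) - 1) / 2 := h1
    _ ≤ (b : ℝ) ^ (2 ^ n : ℕ) := h5
    _ = b ^ ((2 ^ n : ℕ) : ℝ) := h2
    _ ≤ b ^ (1 + 2 * t) := h3
    _ = b * Real.exp (2 * Real.log b * t) := h4
end

section
/- Let (X, τ) be a Hausdorff locally convex space, I a set, F a set of functions from I to [0,∞) having the rational summability property (with sets M_n covering I and witnesses k₂ ∈ F, (b_n)), and (S(t))_{t∈I} a family of linear maps from X to X. Suppose there is a generating system of seminorms P, k₁ ∈ F and K ≥ 0 such that for every p ∈ P there is a sequence (q_n) in P with sup_{t∈M_n} p(k₁(t) S(t) x) ≤ K q_n(x) for all n and all x ∈ X. Then there is a non-negative sequence (a_n) with Σ a_n = 1 such that sup_{t∈I} p(k₂(t) S(t) x) ≤ K (Σ_{k≥0} b_k) sup_n a_n q_n(x) for all x ∈ X. -/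
open Filter Topology

theorem functional_equicontinuity_from_local
    {X : Type*} [AddCommGroup X] [Module ℝ X] [TopologicalSpace X]
    [IsTopologicalAddGroup X] [ContinuousSMul ℝ X] [T2Space X] [LocallyConvexSpace ℝ X]
    {I : Type*} (F : Set (I → ℝ)) (k₁ k₂ : I → ℝ)
    (hk₁F : k₁ ∈ F) (hk₂F : k₂ ∈ F)
    (hFnonneg : ∀ k ∈ F, ∀ t : I, 0 ≤ k t)
    -- the rational summability data for `k₁` (sets `M n`, witnesses `k₂`, `b`)
    (M : ℕ → Set I) (hMcov : (⋃ n : ℕ, M n) = Set.univ)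
    (b : ℕ → ℝ) (hb0 : ∀ n, 0 ≤ b n) (hbsum : Summable b) (hbpos : 0 < ∑' n, b n)
    (hrsp0 : ∀ t ∈ M 0, k₂ t ≤ b 0 * k₁ t)
    (hrsp : ∀ n : ℕ, ∀ t ∈ M (n + 1) \ M n, k₂ t ≤ b (n + 1) * k₁ t)
    -- a generating system of seminorms
    {ι : Type*} [Nonempty ι] (p : SeminormFamily ℝ X ι) (hp : WithSeminorms p)
    (S : I → X →ₗ[ℝ] X) (K : ℝ) (hK : 0 ≤ K)
    (q : ι → ℕ → ι)
    (hq : ∀ i : ι, ∀ n : ℕ, ∀ t ∈ M n, ∀ x : X, p i (k₁ t • S t x) ≤ K * p (q i n) x) :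
    ∃ a : ℕ → ℝ, (∀ n, 0 ≤ a n) ∧ (∑' n, a n) = 1 ∧
      ∀ i : ι, ∀ t : I, ∀ x : X,
        ENNReal.ofReal (p i (k₂ t • S t x)) ≤
          ENNReal.ofReal (K * ∑' n, b n) * ⨆ n : ℕ, ENNReal.ofReal (a n * p (q i n) x) := by

  set T := ∑' n, b n with hT
  have hTne : T ≠ 0 := ne_of_gt hbpos
  refine ⟨fun n => b n / T, fun n => div_nonneg (hb0 n) hbpos.le, ?_, ?_⟩
  · rw [tsum_div_const]
    exact div_self hTne
  · intro i t x
    haveI : DecidablePred fun n => t ∈ M n := Classical.decPred _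
    have ht : ∃ n, t ∈ M n := by
      have : t ∈ ⋃ n, M n := hMcov ▸ Set.mem_univ t
      exact Set.mem_iUnion.mp this
    set n := Nat.find ht with hn
    have htn : t ∈ M n := Nat.find_spec ht
    have hk2 : k₂ t ≤ b n * k₁ t := by
      rcases Nat.eq_zero_or_eq_succ_pred n with h0 | hs
      · rw [h0]; exact hrsp0 t (h0 ▸ htn)
      · rw [hs]
        refine hrsp (n-1) t ⟨?_, ?_⟩
        · have he : n - 1 + 1 = n := by omega
          rwa [he]
        · exact Nat.find_min ht (by omega)
    have hps : p i (k₂ t • S t x) = k₂ t * p i ((S t) x) := by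
      rw [map_smul_eq_mul, Real.norm_eq_abs, abs_of_nonneg (hFnonneg k₂ hk₂F t)]
    have hps1 : k₁ t * p i ((S t) x) = p i (k₁ t • S t x) := by
      rw [map_smul_eq_mul, Real.norm_eq_abs, abs_of_nonneg (hFnonneg k₁ hk₁F t)]
    have key : p i (k₂ t • S t x) ≤ (K * T) * (b n / T * p (q i n) x) := by
      rw [hps]
      calc k₂ t * p i ((S t) x) ≤ (b n * k₁ t) * p i ((S t) x) :=
            mul_le_mul_of_nonneg_right hk2 (apply_nonneg _ _)
        _ = b n * (k₁ t * p i ((S t) x)) := by ring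
        _ = b n * p i (k₁ t • S t x) := by rw [hps1]
        _ ≤ b n * (K * p (q i n) x) :=
            mul_le_mul_of_nonneg_left (hq i n t htn x) (hb0 n)
        _ = (K * T) * (b n / T * p (q i n) x) := by
            field_simp
    calc ENNReal.ofReal (p i (k₂ t • S t x))
        ≤ ENNReal.ofReal ((K * T) * (b n / T * p (q i n) x)) := ENNReal.ofReal_le_ofReal key
      _ = ENNReal.ofReal (K * T) * ENNReal.ofReal (b n / T * p (q i n) x) :=
          ENNReal.ofReal_mul (mul_nonneg hK hbpos.le)
      _ ≤ ENNReal.ofReal (K * T) * ⨆ m : ℕ, ENNReal.ofReal (b m / T * p (q i m) x) :=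
          mul_le_mul_right (le_iSup (fun m => ENNReal.ofReal (b m / T * p (q i m) x)) n) _
end

section
/- Let (X, ‖·‖) be a normed space, τ ⊆ τ_{‖·‖} a Hausdorff locally convex topology on X such that τ-bounded sets are ‖·‖-bounded, and (S(t))_{t≥0} a semigroup on X (S(0) = id, S(t)S(s) = S(t+s)). If the collection N_τ of τ-continuous seminorms bounded above by ‖·‖ is countably quasi-convex and (S(t))_{t≥0} is locally τ-equicontinuous, then (S(t))_{t≥0} is exponentially τ-equicontinuous, i.e. there exists α ∈ ℝ such that (e^{−αt} S(t))_{t≥0} is τ-equicontinuous. -/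
open Filter Topology

section Aux

variable {X : Type*} [NormedAddCommGroup X] [NormedSpace ℝ X]

/-- Type synonym carrying the auxiliary topology. -/
def AuxSyn (_τ : AuxTopology X) : Type _ := X

variable (τ : AuxTopology X)

instance : AddCommGroup (AuxSyn τ) := inferInstanceAs (AddCommGroup X)
instance : Module ℝ (AuxSyn τ) := inferInstanceAs (Module ℝ X)
instance : TopologicalSpace (AuxSyn τ) := τ.top

/-- A `τ`-continuous seminorm is bounded by a multiple (`≥ 1`) of the norm. -/
theorem aux_norm_bound (hle : (inferInstance : TopologicalSpace X) ≤ τ.top)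
    (p : Seminorm ℝ X) (hp : @Continuous X ℝ τ.top _ fun x => p x) :
    ∃ C : ℝ, 1 ≤ C ∧ ∀ x, p x ≤ C * ‖x‖ := by
  have hc : Continuous fun x : X => p x := by
    have h := @Continuous.comp X X ℝ inferInstance τ.top inferInstance _ _ hp
      (continuous_id_of_le hle)
    exact h
  obtain ⟨C, hC, hCb⟩ := p.bound_of_continuous_normedSpace hc
  refine ⟨max C 1, le_max_right _ _, fun x => (hCb x).trans ?_⟩
  have : (0:ℝ) ≤ ‖x‖ := norm_nonneg x
  have : C ≤ max C 1 := le_max_left _ _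
  gcongr

/-- Uniform norm-bound for the semigroup on `[0,1]`. -/
theorem aux_M (hle : (inferInstance : TopologicalSpace X) ≤ τ.top)
    (hgrp : @IsTopologicalAddGroup X τ.top _) (hsmul : @ContinuousSMul ℝ X _ _ τ.top)
    (hlc : @LocallyConvexSpace ℝ X _ _ _ _ τ.top)
    (hbdd : ∀ s : Set X, @Bornology.IsVonNBounded ℝ X _ _ _ τ.top s → Bornology.IsBounded s)
    (S : ℝ → X →ₗ[ℝ] X)
    (hloc : ∀ M : Set ℝ, M ⊆ Set.Ici 0 → IsCompact M →
      ∀ p : Seminorm ℝ X, (@Continuous X ℝ τ.top _ fun x => p x) →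
        ∃ q : Seminorm ℝ X, (@Continuous X ℝ τ.top _ fun x => q x) ∧
          ∃ K : ℝ, 0 ≤ K ∧ ∀ t ∈ M, ∀ x : X, p (S t x) ≤ K * q x) :
    ∃ M : ℝ, 1 ≤ M ∧ ∀ t ∈ Set.Icc (0:ℝ) 1, ∀ x : X, ‖S t x‖ ≤ M * ‖x‖ := by
  haveI : IsTopologicalAddGroup (AuxSyn τ) := hgrp
  haveI : ContinuousSMul ℝ (AuxSyn τ) := hsmul
  haveI : LocallyConvexSpace ℝ (AuxSyn τ) := hlc
  have hWS : WithSeminorms (gaugeSeminormFamily ℝ (AuxSyn τ)) := with_gaugeSeminormFamily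
  set B : Set X := (fun p : ℝ × X => S p.1 p.2) '' (Set.Icc 0 1 ×ˢ Metric.closedBall 0 1)
    with hBdef
  have hBb : Bornology.IsVonNBounded (𝕜 := ℝ) (E := AuxSyn τ) B := by
    apply hWS.isVonNBounded_iff_seminorm_bounded.mpr
    intro i
    have hqc : Continuous fun x : AuxSyn τ => gaugeSeminormFamily ℝ (AuxSyn τ) i x :=
      hWS.continuous_seminorm i
    obtain ⟨q', hq'c, K, hK, hKq⟩ := hloc (Set.Icc 0 1) (fun t ht => ht.1) isCompact_Icc
      (gaugeSeminormFamily ℝ (AuxSyn τ) i) hqc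
    obtain ⟨C, hC1, hCq⟩ := aux_norm_bound τ hle q' hq'c
    refine ⟨K * C + 1, by nlinarith, ?_⟩
    rintro y ⟨⟨t, x⟩, ⟨ht, hx⟩, rfl⟩
    have hx1 : ‖x‖ ≤ 1 := by simpa using hx
    have h1 : gaugeSeminormFamily ℝ (AuxSyn τ) i (S t x) ≤ K * q' x := hKq t ht x
    have h2 : q' x ≤ C * ‖x‖ := hCq x
    have h3 : C * ‖x‖ ≤ C := by nlinarith
    nlinarith
  have hBn : Bornology.IsBounded B := hbdd B hBb
  obtain ⟨R, hR⟩ := (isBounded_iff_forall_norm_le.mp hBn)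
  refine ⟨max R 1, le_max_right _ _, ?_⟩
  intro t ht x
  rcases eq_or_ne x 0 with rfl | hx
  · simp
  · have hxn : (0:ℝ) < ‖x‖ := norm_pos_iff.mpr hx
    have hmem : S t (‖x‖⁻¹ • x) ∈ B := by
      refine ⟨(t, ‖x‖⁻¹ • x), ⟨ht, ?_⟩, rfl⟩
      simp [norm_smul, abs_of_pos (inv_pos.mpr hxn), inv_mul_cancel₀ hxn.ne']
    have h1 : ‖S t (‖x‖⁻¹ • x)‖ ≤ R := hR _ hmem
    rw [map_smul, norm_smul, norm_inv, norm_norm] at h1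
    have h2 : ‖S t x‖ ≤ R * ‖x‖ := by
      rw [inv_mul_le_iff₀ hxn] at h1
      linarith [h1]
    have : R * ‖x‖ ≤ max R 1 * ‖x‖ := by
      have := le_max_left R 1
      gcongr
    linarith
end Aux

section Step

variable {X : Type*} [NormedAddCommGroup X] [NormedSpace ℝ X] (τ : AuxTopology X)

/-- The basic step: from a `τ`-continuous seminorm `p ≤ C‖·‖` produce `p'` in `N_τ` dominating
`sup_{t ∈ [0,1]} p (S t ·) / (C M)`. -/
theorem aux_step (hgrp : @IsTopologicalAddGroup X τ.top _)
    (S : ℝ → X →ₗ[ℝ] X)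
    (hloc : ∀ M : Set ℝ, M ⊆ Set.Ici 0 → IsCompact M →
      ∀ p : Seminorm ℝ X, (@Continuous X ℝ τ.top _ fun x => p x) →
        ∃ q : Seminorm ℝ X, (@Continuous X ℝ τ.top _ fun x => q x) ∧
          ∃ K : ℝ, 0 ≤ K ∧ ∀ t ∈ M, ∀ x : X, p (S t x) ≤ K * q x)
    {M : ℝ} (hM : 1 ≤ M) (hMb : ∀ t ∈ Set.Icc (0:ℝ) 1, ∀ x : X, ‖S t x‖ ≤ M * ‖x‖)
    {C : ℝ} (hC : 1 ≤ C)
    (p : Seminorm ℝ X) (hpc : @Continuous X ℝ τ.top _ fun x => p x)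
    (hpC : ∀ x, p x ≤ C * ‖x‖) :
    ∃ p' : Seminorm ℝ X, ((@Continuous X ℝ τ.top _ fun x => p' x) ∧ ∀ x, p' x ≤ ‖x‖) ∧
      ∀ t ∈ Set.Icc (0:ℝ) 1, ∀ x, p (S t x) ≤ (C * M) * p' x := by
  haveI : IsTopologicalAddGroup (AuxSyn τ) := hgrp
  haveI : Nonempty (Set.Icc (0:ℝ) 1) := ⟨⟨0, by norm_num⟩⟩
  have hM0 : (0:ℝ) < M := lt_of_lt_of_le one_pos hM
  have hC0 : (0:ℝ) < C := lt_of_lt_of_le one_pos hC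
  have hCM0 : (0:ℝ) < C * M := mul_pos hC0 hM0
  set f : Set.Icc (0:ℝ) 1 → Seminorm ℝ X := fun t => p.comp (S t.1) with hf
  have hfbound : ∀ (t : Set.Icc (0:ℝ) 1) x, f t x ≤ C * M * ‖x‖ := by
    intro t x
    have h1 : p (S t.1 x) ≤ C * ‖S t.1 x‖ := hpC _
    have h2 : ‖S t.1 x‖ ≤ M * ‖x‖ := hMb t.1 t.2 x
    calc f t x = p (S t.1 x) := rfl
      _ ≤ C * ‖S t.1 x‖ := h1
      _ ≤ C * (M * ‖x‖) := by gcongr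
      _ = C * M * ‖x‖ := by ring
  have hbd : BddAbove (Set.range f) := by
    rw [Seminorm.bddAbove_range_iff]
    intro x
    exact ⟨C * M * ‖x‖, by rintro y ⟨t, rfl⟩; exact hfbound t x⟩
  set r : Seminorm ℝ X := ⨆ t, f t with hr
  have hr_apply : ∀ x, r x = ⨆ t : Set.Icc (0:ℝ) 1, f t x := fun x => Seminorm.iSup_apply hbd
  have hr_le : ∀ t : Set.Icc (0:ℝ) 1, f t ≤ r := fun t => le_ciSup hbd t
  have hr_norm : ∀ x, r x ≤ (C * M) * ‖x‖ := by
    intro x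
    rw [hr_apply]
    exact ciSup_le fun t => hfbound t x
  -- continuity of r
  obtain ⟨q, hq, K, hK, hKq⟩ := hloc (Set.Icc 0 1) (fun t ht => ht.1) isCompact_Icc p hpc
  have hrq : ∀ x, r x ≤ K * q x := by
    intro x
    rw [hr_apply]
    exact ciSup_le fun t => hKq t.1 t.2 x
  set qK : Seminorm ℝ X := q.comp ((K : ℝ) • LinearMap.id) with hqK
  have hqK_apply : ∀ x, qK x = K * q x := by
    intro x
    simp [hqK, Seminorm.comp_apply, map_smul_eq_mul, Real.norm_eq_abs, abs_of_nonneg hK]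
  have hrc : Continuous fun x : AuxSyn τ => r x := by
    have hqY : Continuous fun x : AuxSyn τ => q x := hq
    have hKqY : Continuous fun x : AuxSyn τ => qK x := by
      have heq : (fun x : AuxSyn τ => qK x) = fun x : AuxSyn τ => K * q x := by
        ext x
        exact hqK_apply x
      rw [heq]
      exact continuous_const.mul hqY
    let rY : Seminorm ℝ (AuxSyn τ) := r
    let qKY : Seminorm ℝ (AuxSyn τ) := qK
    have hKqY' : Continuous fun x : AuxSyn τ => qKY x := hKqY
    have hleY : rY ≤ qKY := by
      intro x
      show r x ≤ qK x
      rw [hqK_apply x]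
      exact hrq x
    have hres := Seminorm.continuous_of_le (𝕝 := ℝ) (E := AuxSyn τ) hKqY' hleY
    exact hres
  -- the normalized seminorm
  set p' : Seminorm ℝ X := r.comp (((C * M)⁻¹ : ℝ) • LinearMap.id) with hp'
  have hp'_apply : ∀ x, p' x = (C * M)⁻¹ * r x := by
    intro x
    simp [hp', Seminorm.comp_apply, map_smul_eq_mul, Real.norm_eq_abs,
      abs_of_pos hM0, abs_of_pos hC0, mul_inv]
  refine ⟨p', ⟨?_, ?_⟩, ?_⟩
  · have heq : (fun x : AuxSyn τ => p' x) = fun x : AuxSyn τ => (C * M)⁻¹ * r x := by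
      ext x
      exact hp'_apply x
    exact (by rw [heq]; exact continuous_const.mul hrc :
      Continuous fun x : AuxSyn τ => p' x)
  · intro x
    rw [hp'_apply, inv_mul_le_iff₀ hCM0]
    exact (hr_norm x).trans (by rw [mul_comm])
  · intro t ht x
    have h1 : p (S t x) ≤ r x := by
      have := hr_le ⟨t, ht⟩ x
      simpa [hf] using this
    have h2 : (C * M) * p' x = r x := by
      rw [hp'_apply]
      field_simp
    rw [h2]
    exact h1

end Step

theorem semigroup_exponentially_equicontinuous_of_locally_equicontinuous
    {X : Type*} [NormedAddCommGroup X] [NormedSpace ℝ X]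
    (τ : AuxTopology X)
    (hle : (inferInstance : TopologicalSpace X) ≤ τ.top)
    (hgrp : @IsTopologicalAddGroup X τ.top _) (hsmul : @ContinuousSMul ℝ X _ _ τ.top)
    (hT2 : @T2Space X τ.top) (hlc : @LocallyConvexSpace ℝ X _ _ _ _ τ.top)
    (hbdd : ∀ s : Set X, @Bornology.IsVonNBounded ℝ X _ _ _ τ.top s → Bornology.IsBounded s)
    (S : ℝ → X →ₗ[ℝ] X)
    (hS0 : S 0 = LinearMap.id)
    (hsg : ∀ t s : ℝ, 0 ≤ t → 0 ≤ s → ∀ x : X, S t (S s x) = S (t + s) x)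
    -- `N_τ` is countably quasi-convex
    (hconv : ∀ P : ℕ → Seminorm ℝ X,
      (∀ n, (@Continuous X ℝ τ.top _ fun x => P n x) ∧ ∀ x, P n x ≤ ‖x‖) →
      ∀ a : ℕ → ℝ, (∀ n, 0 ≤ a n) → (∑' n, a n) = 1 →
        ∃ Q : Seminorm ℝ X, ((@Continuous X ℝ τ.top _ fun x => Q x) ∧ ∀ x, Q x ≤ ‖x‖) ∧
          ∀ n x, a n * P n x ≤ Q x)
    -- `(S t)` is locally `τ`-equicontinuous
    (hloc : ∀ M : Set ℝ, M ⊆ Set.Ici 0 → IsCompact M →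
      ∀ p : Seminorm ℝ X, (@Continuous X ℝ τ.top _ fun x => p x) →
        ∃ q : Seminorm ℝ X, (@Continuous X ℝ τ.top _ fun x => q x) ∧
          ∃ K : ℝ, 0 ≤ K ∧ ∀ t ∈ M, ∀ x : X, p (S t x) ≤ K * q x) :
    -- `(S t)` is exponentially `τ`-equicontinuous
    ∃ α : ℝ, ∀ p : Seminorm ℝ X, (@Continuous X ℝ τ.top _ fun x => p x) →
      ∃ q : Seminorm ℝ X, (@Continuous X ℝ τ.top _ fun x => q x) ∧
        ∃ K : ℝ, 0 ≤ K ∧ ∀ t : ℝ, 0 ≤ t → ∀ x : X,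
          p (Real.exp (-(α * t)) • S t x) ≤ K * q x := by
  obtain ⟨M, hM1, hMb⟩ := aux_M τ hle hgrp hsmul hlc hbdd S hloc
  have hM0 : (0:ℝ) < M := lt_of_lt_of_le one_pos hM1
  have hS0' : ∀ x : X, S 0 x = x := fun x => by rw [hS0]; rfl
  set α : ℝ := Real.log (2 * M) with hα
  have hα0 : 0 ≤ α := Real.log_nonneg (by linarith)
  have hexpα : Real.exp α = 2 * M := Real.exp_log (by linarith)
  refine ⟨α, ?_⟩
  intro p hp
  obtain ⟨C, hC1, hCp⟩ := aux_norm_bound τ hle p hp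
  have hC0 : (0:ℝ) < C := lt_of_lt_of_le one_pos hC1
  -- first step, for `p` itself
  obtain ⟨p₁, hp₁, hstep₀⟩ := aux_step τ hgrp S hloc hM1 hMb hC1 p hp hCp
  -- iterate within `N_τ`
  have key : ∀ pp : {pp : Seminorm ℝ X //
      (@Continuous X ℝ τ.top _ fun x => pp x) ∧ ∀ x, pp x ≤ ‖x‖},
      ∃ p' : Seminorm ℝ X, ((@Continuous X ℝ τ.top _ fun x => p' x) ∧ ∀ x, p' x ≤ ‖x‖) ∧
        ∀ t ∈ Set.Icc (0:ℝ) 1, ∀ x, pp.1 (S t x) ≤ M * p' x := by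
    rintro ⟨pp, hc, hn⟩
    obtain ⟨p', h1, h3⟩ := aux_step τ hgrp S hloc hM1 hMb le_rfl pp hc
      (fun x => by simpa using hn x)
    exact ⟨p', h1, by simpa using h3⟩
  choose step hstep1 hstep2 using key
  set seq : ℕ → {pp : Seminorm ℝ X //
      (@Continuous X ℝ τ.top _ fun x => pp x) ∧ ∀ x, pp x ≤ ‖x‖} :=
    fun n => Nat.rec ⟨p₁, hp₁⟩ (fun _ q => ⟨step q, hstep1 q⟩) n with hseq
  have hseq_step : ∀ n, ∀ t ∈ Set.Icc (0:ℝ) 1, ∀ x,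
      (seq n).1 (S t x) ≤ M * (seq (n+1)).1 x := fun n => hstep2 (seq n)
  -- iterated estimate
  have hB : ∀ n : ℕ, ∀ k : ℕ, ∀ t : ℝ, t ∈ Set.Icc (0:ℝ) (n:ℝ) → ∀ x,
      (seq k).1 (S t x) ≤ M ^ n * (seq (k + n)).1 x := by
    intro n
    induction n with
    | zero =>
      intro k t ht x
      have h0 : t = 0 := le_antisymm (by simpa using ht.2) ht.1
      subst h0
      simp [hS0' x]
    | succ n ih =>
      intro k t ht x
      have htcast : t ≤ (n:ℝ) + 1 := by
        have := ht.2
        push_cast at this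
        linarith
      by_cases htn : t ≤ (n:ℝ)
      · have h1 := ih k t ⟨ht.1, htn⟩ x
        have h2 := hseq_step (k+n) 0 ⟨le_rfl, zero_le_one⟩ x
        rw [hS0'] at h2
        have hMn : (0:ℝ) ≤ M ^ n := by positivity
        calc (seq k).1 (S t x) ≤ M ^ n * (seq (k+n)).1 x := h1
          _ ≤ M ^ n * (M * (seq (k+n+1)).1 x) := by gcongr
          _ = M ^ (n+1) * (seq (k+(n+1))).1 x := by
              rw [show k+n+1 = k+(n+1) from rfl]; ring
      · push_neg at htn
        have hs0 : (0:ℝ) ≤ t - n := by linarith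
        have hs1 : t - n ≤ 1 := by linarith
        have hn0 : (0:ℝ) ≤ (n:ℝ) := Nat.cast_nonneg n
        have hrw : S (t - n) (S n x) = S t x := by
          rw [hsg _ _ hs0 hn0]
          norm_num
        have h1 := hseq_step k (t - n) ⟨hs0, hs1⟩ (S (n:ℝ) x)
        have h2 := ih (k+1) (n:ℝ) ⟨hn0, le_rfl⟩ x
        calc (seq k).1 (S t x) = (seq k).1 (S (t - n) (S (n:ℝ) x)) := by rw [hrw]
          _ ≤ M * (seq (k+1)).1 (S (n:ℝ) x) := h1
          _ ≤ M * (M ^ n * (seq (k+1+n)).1 x) := by gcongr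
          _ = M ^ (n+1) * (seq (k+(n+1))).1 x := by
              rw [show k+1+n = k+(n+1) from by omega]; ring
  -- estimate for p
  have hA : ∀ n : ℕ, ∀ t : ℝ, t ∈ Set.Icc (0:ℝ) ((n:ℝ)+1) → ∀ x,
      p (S t x) ≤ (C * M) * (M ^ n * (seq n).1 x) := by
    intro n t ht x
    have hCM0 : (0:ℝ) ≤ C * M := by positivity
    by_cases ht1 : t ≤ 1
    · have h1 := hstep₀ t ⟨ht.1, ht1⟩ x
      have h2 := hB n 0 0 ⟨le_rfl, Nat.cast_nonneg n⟩ x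
      rw [hS0'] at h2
      simp only [Nat.zero_add] at h2
      calc p (S t x) ≤ (C * M) * (seq 0).1 x := h1
        _ ≤ (C * M) * (M ^ n * (seq n).1 x) := by gcongr
    · push_neg at ht1
      have hrw : S 1 (S (t-1) x) = S t x := by
        rw [hsg _ _ zero_le_one (by linarith)]
        norm_num
      have h1 := hstep₀ 1 ⟨zero_le_one, le_rfl⟩ (S (t-1) x)
      have h2 := hB n 0 (t-1) ⟨by linarith, by linarith [ht.2]⟩ x
      simp only [Nat.zero_add] at h2
      calc p (S t x) = p (S 1 (S (t-1) x)) := by rw [hrw]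
        _ ≤ (C * M) * (seq 0).1 (S (t-1) x) := h1
        _ ≤ (C * M) * (M ^ n * (seq n).1 x) := by gcongr
  -- quasi-convexity
  obtain ⟨Q, ⟨hQc, hQn⟩, hQ⟩ := hconv (fun n => (seq n).1) (fun n => (seq n).2)
    (fun n => (1/2) ^ (n+1)) (fun n => by positivity)
    (by
      have h : ∀ n : ℕ, ((1:ℝ)/2) ^ (n+1) = ((1:ℝ)/2) ^ n * (1/2) := fun n => pow_succ _ _
      rw [tsum_congr h, tsum_mul_right, tsum_geometric_two]
      norm_num)
  refine ⟨Q, hQc, 2 * (C * M) * Real.exp α, by positivity, ?_⟩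
  intro t ht x
  set n : ℕ := ⌈t⌉₊ with hn
  have htn : t ∈ Set.Icc (0:ℝ) ((n:ℝ)+1) := ⟨ht, by linarith [Nat.le_ceil t]⟩
  have h1 := hA n t htn x
  have h2 : (seq n).1 x ≤ 2 ^ (n+1) * Q x := by
    have := hQ n x
    have h2pow : ((1:ℝ)/2) ^ (n+1) = ((2:ℝ) ^ (n+1))⁻¹ := by
      rw [one_div, inv_pow]
    rw [h2pow] at this
    rw [← inv_mul_le_iff₀ (by positivity)]
    exact this
  have hQ0 : (0:ℝ) ≤ Q x := apply_nonneg Q x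
  have hCM0 : (0:ℝ) ≤ C * M := by positivity
  have h3 : p (S t x) ≤ 2 * (C * M) * ((2*M) ^ n) * Q x := by
    have : (C * M) * (M ^ n * ((2:ℝ) ^ (n+1) * Q x)) = 2 * (C * M) * ((2*M) ^ n) * Q x := by
      rw [mul_pow]; ring
    calc p (S t x) ≤ (C * M) * (M ^ n * (seq n).1 x) := h1
      _ ≤ (C * M) * (M ^ n * ((2:ℝ) ^ (n+1) * Q x)) := by
          have hMn : (0:ℝ) ≤ M ^ n := by positivity
          gcongr
      _ = 2 * (C * M) * ((2*M) ^ n) * Q x := this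
  have h4 : ((2*M):ℝ) ^ n ≤ Real.exp (α * (t+1)) := by
    rw [← hexpα, ← Real.exp_nat_mul]
    apply Real.exp_le_exp.mpr
    have hnle : (n:ℝ) ≤ t + 1 := le_of_lt (Nat.ceil_lt_add_one ht)
    calc (n:ℝ) * α ≤ (t+1) * α := by gcongr
      _ = α * (t+1) := by ring
  have h5 : p (S t x) ≤ 2 * (C * M) * Real.exp (α * (t+1)) * Q x := by
    calc p (S t x) ≤ 2 * (C * M) * ((2*M) ^ n) * Q x := h3
      _ ≤ 2 * (C * M) * Real.exp (α * (t+1)) * Q x := by gcongr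
  have hsmul' : p (Real.exp (-(α * t)) • S t x) = Real.exp (-(α * t)) * p (S t x) := by
    rw [map_smul_eq_mul, Real.norm_eq_abs, abs_of_pos (Real.exp_pos _)]
  rw [hsmul']
  have hE : Real.exp (-(α * t)) * Real.exp (α * (t+1)) = Real.exp α := by
    rw [← Real.exp_add]; ring_nf
  calc Real.exp (-(α * t)) * p (S t x)
      ≤ Real.exp (-(α * t)) * (2 * (C * M) * Real.exp (α * (t+1)) * Q x) := by
        have := Real.exp_pos (-(α * t))
        gcongr
    _ = (Real.exp (-(α * t)) * Real.exp (α * (t+1))) * (2 * (C * M)) * Q x := by ring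
    _ = 2 * (C * M) * Real.exp α * Q x := by rw [hE]; ring
end
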